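/- Let M be a matroid on {1, …, n} with base family 𝓑 and let k ≥ 1. Then S_{k+1}(𝓑) = A(S_k(𝓑)); that is, the family of (k+1)-st multigraded shift supports equals the adjacency family of the family of k-th multigraded shift supports. -/

import Mathlib

/-!
For a matroid, `U ∈ S_ℓ(𝓑)` exactly when every element of `U` is a non-loop and `U` contains a
base `B` with `|U \ B| = ℓ`: for the converse, a base `B ⊆ U` of maximal weight `∑_{x ∈ B} x` can
absorb every `e ∈ U \ B` by a lex-increasing exchange. In these terms both inclusions are set
bookkeeping: if `|U \ B| = k + 1 ≥ 2`, deleting either of two elements of `U \ B` writes `U` as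
the union of two adjacent members of `S_k`; and if `C ⊇ B` and `D` are adjacent members of `S_k`,
then `(C ∪ D) \ B` is `C \ B` plus the single element of `D \ C`.
-/

/-- Two sets are *adjacent* if each has exactly one element outside the other. -/
def AdjacentSets {α : Type*} (B C : Set α) : Prop :=
  (B \ C).ncard = 1 ∧ (C \ B).ncard = 1

/-- The *adjacency family* of a family of sets: all unions of adjacent pairs of members. -/
def adjFam {α : Type*} (𝓕 : Set (Set α)) : Set (Set α) :=
  {U | ∃ B ∈ 𝓕, ∃ C ∈ 𝓕, AdjacentSets B C ∧ U = B ∪ C}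

/-- For a family `𝓑` of subsets of `{1, …, n}` (ordered so that `i >_lex j ↔ i < j` as
integers) and `B ∈ 𝓑`, the set `set(B)` consists of all `e ∉ B` for which there exists
`t ∈ B` with `e >_lex t` (that is, `e < t`) and `(B \ {t}) ∪ {e} ∈ 𝓑`. -/
def lexSet {n : ℕ} (𝓑 : Set (Set (Fin n))) (B : Set (Fin n)) : Set (Fin n) :=
  {e | e ∉ B ∧ ∃ t ∈ B, e < t ∧ insert e (B \ {t}) ∈ 𝓑}

/-- `S_ℓ(𝓑) = { B ∪ E : B ∈ 𝓑, E ⊆ set(B), |E| = ℓ }`, the family of supports of the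
`ℓ`-th multigraded shifts of the matroidal ideal of `𝓑`. -/
def shiftFam {n : ℕ} (𝓑 : Set (Set (Fin n))) (ℓ : ℕ) : Set (Set (Fin n)) :=
  {U | ∃ B ∈ 𝓑, ∃ E, E ⊆ lexSet 𝓑 B ∧ E.ncard = ℓ ∧ U = B ∪ E}

open Set

namespace Matroid

variable {α : Type*} {M : Matroid α} {B : Set α} {e : α}

/-- Any `t ≠ e` in the fundamental circuit of `e` with respect to `B` works. -/
lemma IsBase.exists_isBase_insert_sdiff_singleton (hB : M.IsBase B) (he : M.IsNonloop e)
    (heB : e ∉ B) : ∃ t ∈ B, M.IsBase (insert e (B \ {t})) := by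
  have hC := hB.fundCircuit_isCircuit he.mem_ground heB
  obtain ⟨t, htC, hte⟩ : ∃ t ∈ M.fundCircuit e B, t ≠ e := by
    by_contra! h
    have hCe : M.fundCircuit e B = {e} :=
      eq_singleton_iff_unique_mem.2 ⟨M.mem_fundCircuit e B, h⟩
    exact he.not_isLoop (singleton_isCircuit.1 (hCe ▸ hC))
  have htB : t ∈ B := by
    simpa [hte] using fundCircuit_subset_insert M e B htC
  have hI := (hB.indep.mem_fundCircuit_iff (by rw [hB.closure_eq]; exact he.mem_ground) heB).1 htC
  refine ⟨t, htB, ?_⟩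
  rw [insert_sdiff_singleton_comm hte.symm]
  exact hB.exchange_isBase_of_indep' htB heB hI

end Matroid

lemma finsum_mem_insert_sdiff_singleton_add {α M : Type*} [AddCommMonoid M] (f : α → M)
    {s : Set α} {a b : α} (hs : s.Finite) (ha : a ∉ s) (hb : b ∈ s) :
    ∑ᶠ x ∈ insert a (s \ {b}), f x + f b = ∑ᶠ x ∈ s, f x + f a := by
  have ha' : a ∉ s \ {b} := fun h => ha h.1
  conv_rhs => rw [← insert_sdiff_self_of_mem hb]
  rw [finsum_mem_insert f ha' (hs.subset sdiff_subset),
    finsum_mem_insert f (a := b) (by simp) (hs.subset sdiff_subset)]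
  abel

lemma AdjacentSets.sdiff_singleton {α : Type*} {U : Set α} {a b : α} (ha : a ∈ U) (hb : b ∈ U)
    (hab : a ≠ b) : AdjacentSets (U \ {a}) (U \ {b}) := by
  have hdiff : ∀ {x y : α}, x ∈ U → x ≠ y → (U \ {y}) \ (U \ {x}) = {x} := by
    intro x y hx hxy
    ext z
    simp only [mem_sdiff, mem_singleton_iff, not_and, not_not]
    grind
  exact ⟨by rw [hdiff hb hab.symm, ncard_singleton], by rw [hdiff ha hab, ncard_singleton]⟩

lemma sdiff_singleton_union_sdiff_singleton {α : Type*} {U : Set α} {a b : α} (hab : a ≠ b) :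
    U \ {a} ∪ U \ {b} = U := by
  rw [← sdiff_inter, singleton_inter_of_notMem (s := {b}) hab, sdiff_empty]

lemma ncard_union_sdiff_of_subset {α : Type*} {B C D : Set α} (hBC : B ⊆ C) (hC : C.Finite)
    (hD : D.Finite) : ((C ∪ D) \ B).ncard = (C \ B).ncard + (D \ C).ncard := by
  have hsplit : (C ∪ D) \ B = C \ B ∪ D \ C := by
    ext x
    simp only [mem_sdiff, mem_union]
    grind
  rw [hsplit, ncard_union_eq (disjoint_left.2 fun x hx hx' => hx'.2 hx.1)
    (hC.subset sdiff_subset) (hD.subset sdiff_subset)]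

section Shift

variable {n : ℕ} {M : Matroid (Fin n)} {U : Set (Fin n)}

lemma exists_isBase_sdiff_subset_lexSet (hU : ∀ e ∈ U, M.IsNonloop e) {B₀ : Set (Fin n)}
    (hB₀ : M.IsBase B₀) (hB₀U : B₀ ⊆ U) :
    ∃ B, M.IsBase B ∧ B ⊆ U ∧ U \ B ⊆ lexSet {B | M.IsBase B} B := by
  obtain ⟨B, ⟨hB, hBU⟩, hmax⟩ := exists_max_image {B | M.IsBase B ∧ B ⊆ U}
    (fun B => ∑ᶠ x ∈ B, (x : ℕ)) (toFinite _) ⟨B₀, hB₀, hB₀U⟩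
  refine ⟨B, hB, hBU, fun e ⟨heU, heB⟩ => ?_⟩
  obtain ⟨t, htB, hB'⟩ := hB.exists_isBase_insert_sdiff_singleton (hU e heU) heB
  have hle := hmax _ ⟨hB', insert_subset heU (sdiff_subset.trans hBU)⟩
  have hsum :=
    finsum_mem_insert_sdiff_singleton_add (fun x : Fin n => (x : ℕ)) (toFinite B) heB htB
  have het : e ≠ t := (ne_of_mem_of_not_mem htB heB).symm
  exact ⟨heB, t, htB, lt_of_le_of_ne (Fin.le_def.2 (by omega)) het, hB'⟩

lemma mem_shiftFam_iff {ℓ : ℕ} :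
    U ∈ shiftFam {B | M.IsBase B} ℓ ↔
      (∀ e ∈ U, M.IsNonloop e) ∧ ∃ B, M.IsBase B ∧ B ⊆ U ∧ (U \ B).ncard = ℓ := by
  constructor
  · rintro ⟨B, hB, E, hEB, rfl, rfl⟩
    refine ⟨?_, B, hB, subset_union_left, ?_⟩
    · rintro e (heB | heE)
      · exact hB.indep.isNonloop_of_mem heB
      · obtain ⟨-, t, -, -, hB'⟩ := hEB heE
        exact hB'.indep.isNonloop_of_mem (mem_insert e _)
    · rw [union_sdiff_left, sdiff_eq_self_iff_disjoint.2 (disjoint_right.2 fun e he => (hEB he).1)]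
  · rintro ⟨hU, B₀, hB₀, hB₀U, rfl⟩
    obtain ⟨B, hB, hBU, hlex⟩ := exists_isBase_sdiff_subset_lexSet hU hB₀ hB₀U
    refine ⟨B, hB, U \ B, hlex, ?_, (union_sdiff_cancel hBU).symm⟩
    rw [ncard_sdiff hBU, ncard_sdiff hB₀U, hB.ncard_eq_ncard_of_isBase hB₀]

lemma shiftFam_succ_subset_adjFam {k : ℕ} (hk : 1 ≤ k) :
    shiftFam {B | M.IsBase B} (k + 1) ⊆ adjFam (shiftFam {B | M.IsBase B} k) := by
  intro U hU
  obtain ⟨hU, B, hB, hBU, hcard⟩ := mem_shiftFam_iff.1 hU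
  obtain ⟨a, b, ha, hb, hab⟩ :=
    (one_lt_ncard_iff (toFinite _)).1 (show 1 < (U \ B).ncard by omega)
  have hdel : ∀ e ∈ U \ B, U \ {e} ∈ shiftFam {B | M.IsBase B} k := fun e he =>
    mem_shiftFam_iff.2 ⟨fun x hx => hU x hx.1, B, hB, subset_sdiff_singleton hBU he.2, by
      rw [sdiff_right_comm, ncard_sdiff_singleton_of_mem he, hcard, Nat.add_sub_cancel]⟩
  exact ⟨U \ {a}, hdel a ha, U \ {b}, hdel b hb, .sdiff_singleton ha.1 hb.1 hab,
    (sdiff_singleton_union_sdiff_singleton hab).symm⟩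

lemma adjFam_shiftFam_subset_shiftFam_succ {k : ℕ} :
    adjFam (shiftFam {B | M.IsBase B} k) ⊆ shiftFam {B | M.IsBase B} (k + 1) := by
  rintro _ ⟨C, hC, D, hD, ⟨-, hDC⟩, rfl⟩
  obtain ⟨hCl, B, hB, hBC, hcard⟩ := mem_shiftFam_iff.1 hC
  obtain ⟨hDl, -⟩ := mem_shiftFam_iff.1 hD
  refine mem_shiftFam_iff.2 ⟨fun e he => he.elim (hCl e) (hDl e), B, hB,
    hBC.trans subset_union_left, ?_⟩
  rw [ncard_union_sdiff_of_subset hBC (toFinite C) (toFinite D), hcard, hDC]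

end Shift

theorem shiftFam_succ_eq_adjFam_shiftFam_general {n : ℕ} (M : Matroid (Fin n))
    (𝓑 : Set (Set (Fin n))) (h𝓑 : 𝓑 = {B | M.IsBase B})
    (k : ℕ) (hk : 1 ≤ k) :
    shiftFam 𝓑 (k + 1) = adjFam (shiftFam 𝓑 k) := by
  subst h𝓑
  exact (shiftFam_succ_subset_adjFam hk).antisymm adjFam_shiftFam_subset_shiftFam_succ

/-- Let `M` be a matroid on `{1, …, n}` with base family `𝓑` and let
`k ≥ 1`.  Then `S_{k+1}(𝓑) = A(S_k(𝓑))`: the family of `(k+1)`-st multigraded shift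
supports equals the adjacency family of the family of `k`-th multigraded shift
supports. -/
theorem shiftFam_succ_eq_adjFam_shiftFam {n : ℕ} (M : Matroid (Fin n))
    (hE : M.E = Set.univ) (𝓑 : Set (Set (Fin n))) (h𝓑 : 𝓑 = {B | M.IsBase B})
    (k : ℕ) (hk : 1 ≤ k) :
    shiftFam 𝓑 (k + 1) = adjFam (shiftFam 𝓑 k) :=
  shiftFam_succ_eq_adjFam_shiftFam_general M 𝓑 h𝓑 k hk
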